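/- If h : V → ℝ is harmonic on a connected open set V ⊆ ℂ containing [0,1], with |h| ≤ 1 on V and |h(0)| ≤ a for some fixed a < 1, then there exists λ with 0 < λ < 1, depending only on V and a (not on h), such that |h(1)| ≤ λ. -/

import Mathlib

/-- A real-valued function on an open subset of `ℂ` is harmonic if it is `C²` there and
its Laplacian `∂²h/∂x² + ∂²h/∂y²` vanishes. -/
def HarmonicOnSet (h : ℂ → ℝ) (V : Set ℂ) : Prop :=
  ContDiffOn ℝ 2 h V ∧ ∀ z ∈ V,
    fderiv ℝ (fun w => fderiv ℝ h w 1) z 1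
      + fderiv ℝ (fun w => fderiv ℝ h w Complex.I) z Complex.I = 0


/-! Harnack's inequality via the Poisson formula: a nonnegative harmonic function `u` on a
closed disc of radius `R` satisfies `u w ≥ (R - r) / (R + r) * u c` at distance `r` from the
centre, hence `u w ≥ u c / 3` when `r ≤ R / 2`. If `R` is less than the distance from `[0,1]`
to the complement of `V`, a chain of `n ≥ 2 / R` such steps along the segment gives
`u 1 ≥ 3⁻ⁿ * u 0` for every nonnegative harmonic `u` on `V`. Applied to `1 - h` and `1 + h`
this yields `|h 1| ≤ 1 - 3⁻ⁿ * (1 - |h 0|)`. -/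

open InnerProductSpace Metric Complex Laplacian

theorem laplacian_complexPlane_eq_fderiv_fderiv {F : Type*} [NormedAddCommGroup F] [NormedSpace ℝ F]
    {f : ℂ → F} {z : ℂ} (hf : ContDiffAt ℝ 2 f z) :
    Δ f z = fderiv ℝ (fun w => fderiv ℝ f w 1) z 1 + fderiv ℝ (fun w => fderiv ℝ f w I) z I := by
  have hf' : DifferentiableAt ℝ (fderiv ℝ f) z :=
    (hf.fderiv_right (m := 1) (by norm_num)).differentiableAt one_ne_zero
  simp [laplacian_eq_iteratedFDeriv_complexPlane, iteratedFDeriv_two_apply,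
    fderiv_clm_apply hf' (differentiableAt_const _)]

theorem HarmonicOnSet.harmonicOnNhd {h : ℂ → ℝ} {V : Set ℂ} (hV : IsOpen V)
    (hh : HarmonicOnSet h V) : HarmonicOnNhd h V := by
  intro z hz
  refine ⟨hh.1.contDiffAt (hV.mem_nhds hz), ?_⟩
  filter_upwards [hV.mem_nhds hz] with w hw
  rw [laplacian_complexPlane_eq_fderiv_fderiv (hh.1.contDiffAt (hV.mem_nhds hw))]
  exact hh.2 w hw

theorem continuousOn_poissonKernel_sphere {c w : ℂ} {R : ℝ} (hw : w ∈ ball c R) :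
    ContinuousOn (poissonKernel c w) (sphere c R) := by
  have hne : ∀ z ∈ sphere c R, z - c - (w - c) ≠ 0 := fun z hz heq => by
    rw [sub_sub_sub_cancel_right, sub_eq_zero] at heq
    rw [heq, mem_sphere] at hz
    exact (mem_ball.1 hw).ne hz
  simp_rw [funext (poissonKernel_def c w)]
  exact (by fun_prop : Continuous fun z => ‖z - c‖ ^ 2 - ‖w - c‖ ^ 2).continuousOn.div
    (by fun_prop) fun z hz => pow_ne_zero 2 (norm_ne_zero_iff.2 (hne z hz))

theorem div_le_poissonKernel {c w z : ℂ} {R : ℝ} (hz : z ∈ sphere c R) (hw : w ∈ ball c R) :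
    (R - dist w c) / (R + dist w c) ≤ poissonKernel c w z := by
  rw [mem_sphere, dist_eq_norm] at hz
  rw [mem_ball, dist_eq_norm] at hw
  rw [dist_eq_norm, poissonKernel_def, hz, sub_sub_sub_cancel_right]
  have hzw_le : ‖z - w‖ ≤ R + ‖w - c‖ := by
    simpa [hz, norm_sub_rev c w] using norm_sub_le_norm_sub_add_norm_sub z c w
  have hzw_pos : 0 < ‖z - w‖ := by
    have := norm_sub_norm_le (z - c) (w - c)
    rw [hz, sub_sub_sub_cancel_right] at this
    linarith
  have hsum : R + ‖w - c‖ ≠ 0 := (by linarith : 0 < R + ‖w - c‖).ne'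
  calc (R - ‖w - c‖) / (R + ‖w - c‖) = (R ^ 2 - ‖w - c‖ ^ 2) / (R + ‖w - c‖) ^ 2 := by
        field_simp; ring
    _ ≤ (R ^ 2 - ‖w - c‖ ^ 2) / ‖z - w‖ ^ 2 := by
        gcongr
        nlinarith

theorem InnerProductSpace.HarmonicOnNhd.harnack {u : ℂ → ℝ} {c w : ℂ} {R : ℝ}
    (hu : HarmonicOnNhd u (closedBall c R)) (hnn : ∀ z ∈ sphere c R, 0 ≤ u z)
    (hw : w ∈ ball c R) :
    (R - dist w c) / (R + dist w c) * u c ≤ u w := by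
  have hR : |R| = R := abs_of_pos (pos_of_mem_ball hw)
  have hu_cont : ContinuousOn u (sphere c |R|) := by
    rw [hR]; exact hu.continuousOn.mono sphere_subset_closedBall
  have hP_cont : ContinuousOn (poissonKernel c w) (sphere c |R|) := by
    rw [hR]; exact continuousOn_poissonKernel_sphere hw
  calc (R - dist w c) / (R + dist w c) * u c
      = Real.circleAverage (((R - dist w c) / (R + dist w c)) • u) c R := by
        rw [Real.circleAverage_smul, HarmonicOnNhd.circleAverage_eq (by rwa [hR]), smul_eq_mul]
    _ ≤ Real.circleAverage (poissonKernel c w • u) c R := by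
        refine Real.circleAverage_mono (hu_cont.const_smul _).circleIntegrable'
          (hP_cont.smul hu_cont).circleIntegrable' fun z hz => ?_
        rw [hR] at hz
        exact mul_le_mul_of_nonneg_right (div_le_poissonKernel hz hw) (hnn z hz)
    _ = u w := hu.circleAverage_poissonKernel_smul hw

theorem InnerProductSpace.HarmonicOnNhd.div_three_le_of_dist_le_half {u : ℂ → ℝ} {c w : ℂ}
    {R : ℝ} (hu : HarmonicOnNhd u (closedBall c R)) (hnn : ∀ z ∈ closedBall c R, 0 ≤ u z)
    (hR : 0 < R) (hw : dist w c ≤ R / 2) :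
    u c / 3 ≤ u w := by
  have hw_ball : w ∈ ball c R := mem_ball.2 (by linarith)
  have hratio : 1 / 3 ≤ (R - dist w c) / (R + dist w c) := by
    rw [le_div_iff₀ (by positivity)]
    linarith
  calc u c / 3 = 1 / 3 * u c := by ring
    _ ≤ (R - dist w c) / (R + dist w c) * u c :=
        mul_le_mul_of_nonneg_right hratio (hnn c (mem_closedBall_self hR.le))
    _ ≤ u w := hu.harnack (fun z hz => hnn z (sphere_subset_closedBall hz)) hw_ball

theorem InnerProductSpace.HarmonicOnNhd.pow_mul_le_of_segment {u : ℂ → ℝ} {V : Set ℂ}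
    (hu : HarmonicOnNhd u V) (hnn : ∀ z ∈ V, 0 ≤ u z) {x y : ℂ} {R : ℝ} (hR : 0 < R)
    (hball : ∀ z ∈ segment ℝ x y, closedBall z R ⊆ V) {n : ℕ} (hn : dist x y ≤ n * (R / 2)) :
    (1 / 3) ^ n * u x ≤ u y := by
  rcases n.eq_zero_or_pos with rfl | hn_pos
  · obtain rfl : x = y := dist_le_zero.1 (by simpa using hn)
    simp
  set p : ℕ → ℂ := fun k => AffineMap.lineMap x y ((k : ℝ) / n)
  have hn_pos' : (0 : ℝ) < n := by exact_mod_cast hn_pos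
  have step : ∀ k < n, u (p k) / 3 ≤ u (p (k + 1)) := by
    intro k hk
    have hpk : p k ∈ segment ℝ x y := by
      rw [segment_eq_image_lineMap]
      exact ⟨_, ⟨by positivity, div_le_one_of_le₀ (by exact_mod_cast hk.le) hn_pos'.le⟩, rfl⟩
    refine (hu.mono (hball _ hpk)).div_three_le_of_dist_le_half
      (fun z hz => hnn z (hball _ hpk hz)) hR ?_
    rw [dist_lineMap_lineMap, Real.dist_eq, Nat.cast_succ, ← sub_div, add_sub_cancel_left,
      abs_of_pos (by positivity), one_div_mul_eq_div, div_le_iff₀ hn_pos']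
    linarith
  have chain : ∀ k ≤ n, (1 / 3) ^ k * u x ≤ u (p k) := by
    intro k
    induction k with
    | zero => simp [p]
    | succ k ih =>
      intro hk
      calc (1 / 3 : ℝ) ^ (k + 1) * u x = (1 / 3) ^ k * u x / 3 := by ring
        _ ≤ u (p k) / 3 := by gcongr; exact ih (by omega)
        _ ≤ u (p (k + 1)) := step k hk
  simpa [p, hn_pos'.ne'] using chain n le_rfl

theorem abs_le_one_sub_mul_of_harnack {E : Type*} [NormedAddCommGroup E]
    [InnerProductSpace ℝ E] [FiniteDimensional ℝ E] {V : Set E} {x y : E} {c : ℝ} (hc : 0 ≤ c)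
    (harnack : ∀ u : E → ℝ, HarmonicOnNhd u V → (∀ z ∈ V, 0 ≤ u z) → c * u x ≤ u y)
    {h : E → ℝ} (hh : HarmonicOnNhd h V) (hbd : ∀ z ∈ V, |h z| ≤ 1) :
    |h y| ≤ 1 - c * (1 - |h x|) := by
  have upper := harnack (fun z => 1 - h z) ((harmonicOnNhd_const 1).sub hh)
    fun z hz => by linarith [(abs_le.1 (hbd z hz)).2]
  have lower := harnack (fun z => 1 + h z) ((harmonicOnNhd_const 1).add hh)
    fun z hz => by linarith [(abs_le.1 (hbd z hz)).1]
  have := mul_le_mul_of_nonneg_left (le_abs_self (h x)) hc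
  have := mul_le_mul_of_nonneg_left (neg_abs_le (h x)) hc
  rw [abs_le]
  constructor <;> linarith

theorem harnack_value_at_one_general (V : Set ℂ) (hV : IsOpen V)
    (hseg : segment ℝ (0 : ℂ) 1 ⊆ V) (a : ℝ) (ha : a < 1) :
    ∃ lam : ℝ, 0 < lam ∧ lam < 1 ∧ ∀ h : ℂ → ℝ, HarmonicOnSet h V →
      (∀ z ∈ V, |h z| ≤ 1) → |h 0| ≤ a → |h 1| ≤ lam := by
  have hcompact : IsCompact (segment ℝ (0 : ℂ) 1) :=
    convexHull_pair (𝕜 := ℝ) (0 : ℂ) 1 ▸ (Set.toFinite _).isCompact_convexHull (𝕜 := ℝ)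
  obtain ⟨R, hR, hRV⟩ := hcompact.exists_cthickening_subset_open hV hseg
  obtain ⟨n, hn⟩ := exists_nat_gt (2 / R)
  have hn_pos : 0 < n := by exact_mod_cast (by positivity : (0 : ℝ) < 2 / R).trans hn
  set c : ℝ := (1 / 3) ^ n
  have hc_pos : 0 < c := by positivity
  have hc_lt : c < 1 := pow_lt_one₀ (by norm_num) (by norm_num) hn_pos.ne'
  have ha' : max a 0 < 1 := max_lt ha one_pos
  -- `max a 0` rather than `a` keeps `lam` positive when `a` is very negative.
  refine ⟨1 - c * (1 - max a 0), by nlinarith [le_max_right a 0], by nlinarith,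
    fun h hh hbd h0 => ?_⟩
  have harnack : ∀ u : ℂ → ℝ, HarmonicOnNhd u V → (∀ z ∈ V, 0 ≤ u z) → c * u 0 ≤ u 1 :=
    fun u hu hnn => hu.pow_mul_le_of_segment hnn hR
      (fun z hz => (closedBall_subset_cthickening hz R).trans hRV)
      (by rw [dist_zero_left, norm_one]; rw [div_lt_iff₀ hR] at hn; linarith)
  calc |h 1| ≤ 1 - c * (1 - |h 0|) :=
        abs_le_one_sub_mul_of_harnack hc_pos.le harnack (hh.harmonicOnNhd hV) hbd
    _ ≤ 1 - c * (1 - max a 0) := by gcongr; exact h0.trans (le_max_left a 0)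

/-- If `h` is harmonic on a connected open set `V ⊆ ℂ` containing `[0,1]`, with `|h| ≤ 1`
on `V` and `|h(0)| ≤ a` for a fixed `a < 1`, then there is `0 < λ < 1`, depending only on
`V` and `a`, such that `|h(1)| ≤ λ`. -/
theorem harnack_value_at_one (V : Set ℂ) (hV : IsOpen V) (hVc : IsConnected V)
    (hseg : segment ℝ (0 : ℂ) 1 ⊆ V) (a : ℝ) (ha : a < 1) :
    ∃ lam : ℝ, 0 < lam ∧ lam < 1 ∧ ∀ h : ℂ → ℝ, HarmonicOnSet h V →
      (∀ z ∈ V, |h z| ≤ 1) → |h 0| ≤ a → |h 1| ≤ lam :=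
  harnack_value_at_one_general V hV hseg a ha
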